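/- arXiv:2007.08045 — 7 statements merged into one kernel-verified Lean document; each statement's English description precedes it below -/
import Mathlib

section
/- For a finite coalition T of agents with destinations x_a > 0 and a taxi of capacity q with |T| ≤ q, the sum of the Shapley-value payments of the agents in T equals the cost of the taxi, i.e., ∑_{b∈T} φ(T, x_b) = max_{a∈T} x_a, where φ(T,x) = ∫_0^x dr / n_T(r) and n_T(r) = |{a ∈ T : x_a ≥ r}|. -/
open Finset MeasureTheory ENNReal

/-!
Exchange the finite sum with the integral: a point `r ∈ (0, max x]` lies in the intervals
`(0, x_b]` of exactly `n_T(r) ≥ 1` agents, each of whom pays `1 / n_T(r)` there, so the summed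
integrand is the indicator of `(0, max x]`; beyond `max x` no interval contains `r`.
-/

/-- Number of agents in coalition `T` whose destination is at least `r`. -/
noncomputable def nT (xd : ℕ → ℝ) (T : Finset ℕ) (r : ℝ) : ℕ := (T.filter fun a => r ≤ xd a).card

/-- Shapley cost share of a passenger dropping at `y` in coalition `T`
(`∞` when `n_T` vanishes on part of `(0,y]`). -/
noncomputable def phi (xd : ℕ → ℝ) (T : Finset ℕ) (y : ℝ) : ℝ≥0∞ :=
  ∫⁻ r in Set.Ioc (0:ℝ) y, (nT xd T r : ℝ≥0∞)⁻¹

/-- Cost share including the capacity constraint of the taxi. -/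
noncomputable def taxiCost (xd : ℕ → ℝ) (q : ℕ) (T : Finset ℕ) (y : ℝ) : ℝ≥0∞ :=
  if T.card ≤ q then phi xd T y else ⊤

lemma measurable_nT (xd : ℕ → ℝ) (T : Finset ℕ) : Measurable (nT xd T) := by
  have : nT xd T = fun r => ∑ a ∈ T, if r ≤ xd a then 1 else 0 := by
    funext r
    rw [nT, Finset.card_filter]
  rw [this]
  exact Finset.measurable_sum _ fun a _ =>
    Measurable.ite measurableSet_Iic measurable_const measurable_const

lemma nT_pos_iff (xd : ℕ → ℝ) {T : Finset ℕ} (hT : T.Nonempty) (r : ℝ) :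
    0 < nT xd T r ↔ r ≤ T.sup' hT xd := by
  rw [nT, Finset.card_pos, Finset.filter_nonempty_iff, Finset.le_sup'_iff]

lemma sum_indicator_Ioc_eq_nT_smul {M : Type*} [AddCommMonoid M] (xd : ℕ → ℝ) (T : Finset ℕ)
    (g : ℝ → M) (r : ℝ) :
    ∑ b ∈ T, (Set.Ioc 0 (xd b)).indicator g r =
      (Set.Ioi 0).indicator (fun r => nT xd T r • g r) r := by
  by_cases hr : 0 < r
  · simp only [Set.indicator, Set.mem_Ioc, Set.mem_Ioi, hr, true_and, if_true]
    rw [← Finset.sum_filter, Finset.sum_const, nT]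
  · simp [Set.indicator, hr]

lemma nT_smul_inv_eq_indicator_Iic_sup' (xd : ℕ → ℝ) {T : Finset ℕ} (hT : T.Nonempty) (r : ℝ) :
    nT xd T r • (nT xd T r : ℝ≥0∞)⁻¹ = (Set.Iic (T.sup' hT xd)).indicator 1 r := by
  by_cases hr : r ≤ T.sup' hT xd
  · have hn : (nT xd T r : ℝ≥0∞) ≠ 0 := by exact_mod_cast ((nT_pos_iff xd hT r).2 hr).ne'
    rw [Set.indicator_of_mem (Set.mem_Iic.2 hr), nsmul_eq_mul,
      ENNReal.mul_inv_cancel hn (natCast_ne_top _)]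
    rfl
  · have hn : nT xd T r = 0 := by
      simpa using mt (nT_pos_iff xd hT r).1 hr
    rw [Set.indicator_of_notMem (mt Set.mem_Iic.1 hr), hn, zero_smul]

theorem stmt0_general (xd : ℕ → ℝ) (T : Finset ℕ) (hT : T.Nonempty) :
    ∑ b ∈ T, phi xd T (xd b) = ENNReal.ofReal (T.sup' hT xd) := by
  have hmeas : Measurable fun r => (nT xd T r : ℝ≥0∞)⁻¹ :=
    (measurable_from_top.comp (measurable_nT xd T)).inv
  calc ∑ b ∈ T, phi xd T (xd b)
      = ∫⁻ r, ∑ b ∈ T, (Set.Ioc 0 (xd b)).indicator (fun r => (nT xd T r : ℝ≥0∞)⁻¹) r := by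
        rw [lintegral_finsetSum _ fun b _ => hmeas.indicator measurableSet_Ioc]
        simp only [phi, lintegral_indicator measurableSet_Ioc]
    _ = ∫⁻ r in Set.Ioi 0, (Set.Iic (T.sup' hT xd)).indicator 1 r := by
        simp only [sum_indicator_Ioc_eq_nT_smul, nT_smul_inv_eq_indicator_Iic_sup' xd hT,
          lintegral_indicator measurableSet_Ioi]
    _ = ENNReal.ofReal (T.sup' hT xd) := by
        rw [lintegral_indicator_one measurableSet_Iic, Measure.restrict_apply measurableSet_Iic,
          Set.Iic_inter_Ioi, Real.volume_Ioc, sub_zero]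

/-- the Shapley-value payments of the members of a coalition `T`
(with `|T| ≤ q`) sum up to the cost of the taxi, i.e. the furthest destination. -/
theorem stmt0 (xd : ℕ → ℝ) (T : Finset ℕ) (hT : T.Nonempty)
    (hpos : ∀ a ∈ T, 0 < xd a) (q : ℕ) (hq : T.card ≤ q) :
    ∑ b ∈ T, phi xd T (xd b) = ENNReal.ofReal (T.sup' hT xd) :=
  stmt0_general xd T hT
end

section
/- Let T = {a_1,…,a_t} be a coalition with x_{a_1} ≤ … ≤ x_{a_t} and t ≤ q. Then for each i, the Shapley value of agent a_i in the cooperative cost game c(S) = max_{a∈S} x_a (with c(∅)=0) equals ∑_{j=1}^{i} (x_{a_j} − x_{a_{j−1}}) / (t − j + 1), where x_{a_0} = 0. Equivalently, the Shapley value of a_i equals φ(T, x_{a_i}) = ∫_0^{x_{a_i}} dr / n_T(r). -/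
open Finset MeasureTheory

/-- Cost of a sub-coalition: the largest destination among its members (0 for ∅). -/
noncomputable def cmax {t : ℕ} (x : Fin t → ℝ) (S : Finset (Fin t)) : ℝ :=
  if h : S.Nonempty then S.sup' h x else 0

/-- The Shapley value of agent `i` in the cooperative cost game `c S = max_{a∈S} x a`. -/
noncomputable def shapley {t : ℕ} (x : Fin t → ℝ) (i : Fin t) : ℝ :=
  (t.factorial : ℝ)⁻¹ * ∑ π : Equiv.Perm (Fin t),
    (cmax x (Finset.univ.filter fun b => π b ≤ π i) -
      cmax x ((Finset.univ.filter fun b => π b ≤ π i).erase i))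

/-- Destination of the predecessor of agent `j` (with `x_{a_0} = 0`). -/
noncomputable def prevx {t : ℕ} (x : Fin t → ℝ) (j : Fin t) : ℝ :=
  if j.val = 0 then 0 else x ⟨j.val - 1, lt_of_le_of_lt (Nat.pred_le _) j.isLt⟩

/-!
Adding agent `i` to a coalition whose other members already reach `M` costs
`max (x i) M - M`, the length of the heights `r ∈ (0, x i]` with `M < r`. Averaging over
orderings and exchanging the sum with the integral, at height `r` agent `i` pays exactly when
it comes first among the `n_T(r)` agents with `r ≤ x a`, which by symmetry happens for a
fraction `1 / n_T(r)` of the orderings. For sorted destinations `n_T(r) = t - j` on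
`(x_{j-1}, x_j]` (indices from `0`), and cutting `(0, x_i]` into these pieces gives the sum.
-/

namespace Equiv.Perm

variable {α : Type*} [Fintype α] [LinearOrder α]

theorem card_filter_forall_le_eq_of_mem {B : Finset α} {a i : α} (ha : a ∈ B)
    (hi : i ∈ B) :
    #{π : Perm α | ∀ b ∈ B, π a ≤ π b} = #{π : Perm α | ∀ b ∈ B, π i ≤ π b} := by
  have swap_mem : ∀ b ∈ B, swap a i b ∈ B := fun b hb => by
    rw [swap_apply_def]; split_ifs <;> assumption
  refine card_equiv (Equiv.mulRight (swap a i)) fun π => ?_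
  simp only [mem_filter, mem_univ, true_and, coe_mulRight, mul_apply, swap_apply_right]
  constructor
  · exact fun h b hb => h _ (swap_mem b hb)
  · intro h b hb
    simpa using h _ (swap_mem b hb)

/-- Each permutation has exactly one first element in `B`, and by symmetry every member of `B`
is first equally often. -/
theorem card_mul_card_filter_forall_le {B : Finset α} {i : α} (hi : i ∈ B) :
    #B * #{π : Perm α | ∀ b ∈ B, π i ≤ π b} = (Fintype.card α).factorial := by
  have first_unique : ∀ π : Perm α, #{a ∈ B | ∀ b ∈ B, π a ≤ π b} = 1 := fun π => by
    obtain ⟨a, ha, hmin⟩ := B.exists_min_image π ⟨i, hi⟩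
    refine card_eq_one.2 ⟨a, Finset.ext fun c => ?_⟩
    simp only [mem_filter, mem_singleton]
    refine ⟨fun ⟨hc, hcmin⟩ => π.injective (le_antisymm (hcmin a ha) (hmin c hc)), ?_⟩
    rintro rfl
    exact ⟨ha, hmin⟩
  calc #B * #{π : Perm α | ∀ b ∈ B, π i ≤ π b}
      = ∑ a ∈ B, #{π : Perm α | ∀ b ∈ B, π a ≤ π b} := by
        rw [sum_congr rfl fun a ha => card_filter_forall_le_eq_of_mem ha hi, sum_const,
          smul_eq_mul]
    _ = ∑ π : Perm α, #{a ∈ B | ∀ b ∈ B, π a ≤ π b} :=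
        sum_card_bipartiteAbove_eq_sum_card_bipartiteBelow (s := B) (t := univ)
          (fun a (π : Perm α) => ∀ b ∈ B, π a ≤ π b)
    _ = (Fintype.card α).factorial := by
        simp only [first_unique, sum_const, card_univ, Fintype.card_perm, smul_eq_mul, mul_one]

end Equiv.Perm

section MaxGame

variable {t : ℕ} {x : Fin t → ℝ}

theorem cmax_lt_iff {S : Finset (Fin t)} {r : ℝ} (hr : 0 < r) :
    cmax x S < r ↔ ∀ b ∈ S, x b < r := by
  unfold cmax
  split_ifs with hS
  · exact sup'_lt_iff hS
  · simp [not_nonempty_iff_eq_empty.1 hS, hr]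

theorem cmax_nonneg (hx : ∀ a, 0 ≤ x a) (S : Finset (Fin t)) : 0 ≤ cmax x S := by
  unfold cmax
  split_ifs with hS
  · obtain ⟨b, hb⟩ := hS
    exact (hx b).trans (le_sup' x hb)
  · rfl

theorem cmax_insert {i : Fin t} (hi : 0 ≤ x i) (S : Finset (Fin t)) :
    cmax x (insert i S) = max (x i) (cmax x S) := by
  unfold cmax
  rw [dif_pos (insert_nonempty i S)]
  split_ifs with hS
  · exact sup'_insert hS x
  · simp [not_nonempty_iff_eq_empty.1 hS, hi]

theorem max_sub_eq_setIntegral_indicator {a M : ℝ} (hM : 0 ≤ M) :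
    max a M - M = ∫ r in Set.Ioc 0 a, (Set.Ioi M).indicator 1 r := by
  rw [integral_indicator_one measurableSet_Ioi, measureReal_restrict_apply measurableSet_Ioi,
    Set.inter_comm, Set.Ioc_inter_Ioi, max_eq_right hM, Real.volume_real_Ioc]
  rcases le_total a M with h | h <;> simp [h]

theorem cmax_sub_cmax_erase (hx : ∀ a, 0 ≤ x a) {S : Finset (Fin t)} {i : Fin t}
    (hi : i ∈ S) :
    cmax x S - cmax x (S.erase i) =
      ∫ r in Set.Ioc 0 (x i), (Set.Ioi (cmax x (S.erase i))).indicator 1 r := by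
  have hinsert := cmax_insert (hx i) (S.erase i)
  rw [insert_erase hi] at hinsert
  rw [hinsert]
  exact max_sub_eq_setIntegral_indicator (cmax_nonneg hx _)

theorem cmax_predecessors_erase_lt_iff {r : ℝ} (hr : 0 < r) (π : Equiv.Perm (Fin t))
    (i : Fin t) :
    cmax x ((univ.filter fun b => π b ≤ π i).erase i) < r ↔
      ∀ b ∈ univ.filter fun a => r ≤ x a, π i ≤ π b := by
  simp only [cmax_lt_iff hr, mem_erase, mem_filter, mem_univ, true_and, and_imp]
  refine forall_congr' fun b => ⟨fun h hb => ?_, fun h hbi hb => ?_⟩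
  · by_contra hlt
    exact (h (fun hbi => hlt (hbi ▸ le_rfl)) (not_le.1 hlt).le).not_ge hb
  · by_contra hle
    exact hbi (π.injective (le_antisymm hb (h (not_lt.1 hle))))

end MaxGame

/-- The paper's `n_T(r)`. -/
noncomputable def numAtLeast {t : ℕ} (x : Fin t → ℝ) (r : ℝ) : ℕ :=
  #{a | r ≤ x a}

theorem shapley_eq_setIntegral {t : ℕ} {x : Fin t → ℝ} (hx : ∀ a, 0 ≤ x a) (i : Fin t) :
    shapley x i = ∫ r in Set.Ioc 0 (x i), (numAtLeast x r : ℝ)⁻¹ := by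
  have hint : ∀ M : ℝ, IntegrableOn ((Set.Ioi M).indicator 1) (Set.Ioc 0 (x i)) :=
    fun M =>
      (integrableOn_const (C := (1 : ℝ)) measure_Ioc_lt_top.ne).indicator measurableSet_Ioi
  unfold shapley
  rw [sum_congr rfl fun π _ => cmax_sub_cmax_erase hx (by simp : i ∈ univ.filter (π · ≤ π i)),
    ← integral_finsetSum _ fun π _ => hint _, ← integral_const_mul]
  refine setIntegral_congr_fun measurableSet_Ioc fun r ⟨hr0, hri⟩ => ?_
  simp only [Set.indicator_apply, Set.mem_Ioi, Pi.one_apply, cmax_predecessors_erase_lt_iff hr0,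
    sum_boole]
  have hcount := Equiv.Perm.card_mul_card_filter_forall_le
    (by simpa using hri : i ∈ univ.filter fun a => r ≤ x a)
  rw [Fintype.card_fin] at hcount
  have hfirst := right_ne_zero_of_mul (hcount ▸ t.factorial_ne_zero)
  rw [numAtLeast, ← hcount, Nat.cast_mul]
  field_simp
  -- the two filters differ only in their `Decidable` instances
  congr

section Sorted

variable {t : ℕ} {x : Fin t → ℝ}

theorem prevx_nonneg (hx : ∀ a, 0 ≤ x a) (j : Fin t) : 0 ≤ prevx x j := by
  unfold prevx
  split_ifs
  exacts [le_rfl, hx _]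

theorem le_prevx_of_lt (hmono : Monotone x) {k j : Fin t} (hkj : k < j) : x k ≤ prevx x j := by
  rw [prevx, if_neg (by omega)]
  exact hmono (Fin.le_def.2 (by simp only; omega))

theorem prevx_le (hx : ∀ a, 0 ≤ x a) (hmono : Monotone x) (j : Fin t) : prevx x j ≤ x j := by
  unfold prevx
  split_ifs
  exacts [hx j, hmono (Fin.le_def.2 (by simp only; omega))]

theorem numAtLeast_eq_of_mem_Ioc_prevx (hmono : Monotone x) {j : Fin t} {r : ℝ}
    (hr : r ∈ Set.Ioc (prevx x j) (x j)) : numAtLeast x r = t - j := by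
  rw [numAtLeast, ← Fin.card_Ici]
  congr 1
  ext b
  simp only [mem_filter, mem_univ, true_and, mem_Ici]
  refine ⟨fun hb => ?_, fun hb => hr.2.trans (hmono hb)⟩
  by_contra hbj
  exact (hr.1.trans_le hb).not_ge (le_prevx_of_lt hmono (not_le.1 hbj))

theorem pairwise_disjoint_Ioc_prevx (hmono : Monotone x) :
    Pairwise (Function.onFun Disjoint fun j : Fin t => Set.Ioc (prevx x j) (x j)) :=
  (pairwise_disjoint_on _).2 fun _ _ hjk =>
    Set.Ioc_disjoint_Ioc_of_le (le_prevx_of_lt hmono hjk)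

theorem biUnion_Ioc_prevx (hx : ∀ a, 0 ≤ x a) (hmono : Monotone x) (i : Fin t) :
    ⋃ j ∈ Iic i, Set.Ioc (prevx x j) (x j) = Set.Ioc 0 (x i) := by
  ext r
  simp only [Set.mem_iUnion, mem_Iic, Set.mem_Ioc, exists_prop]
  constructor
  · rintro ⟨j, hji, hr, hrj⟩
    exact ⟨(prevx_nonneg hx j).trans_lt hr, hrj.trans (hmono hji)⟩
  · rintro ⟨hr, hri⟩
    obtain ⟨j, hrj, hjmin⟩ := exists_min_image (univ.filter fun a => r ≤ x a) id
      ⟨i, by simpa using hri⟩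
    simp only [mem_filter, mem_univ, true_and, id] at hrj hjmin
    refine ⟨j, hjmin i hri, ?_, hrj⟩
    unfold prevx
    split_ifs with hj
    · exact hr
    · by_contra hle
      exact (hjmin _ (not_lt.1 hle)).not_gt (Fin.lt_def.2 (show j.val - 1 < j.val by omega))

theorem setIntegral_Ioc_prevx_inv_numAtLeast (hx : ∀ a, 0 ≤ x a) (hmono : Monotone x)
    (j : Fin t) :
    ∫ r in Set.Ioc (prevx x j) (x j), (numAtLeast x r : ℝ)⁻¹ =
      (x j - prevx x j) / ((t : ℝ) - (j : ℕ)) := by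
  rw [setIntegral_congr_fun measurableSet_Ioc fun r hr => by
      rw [numAtLeast_eq_of_mem_Ioc_prevx hmono hr],
    setIntegral_const, Real.volume_real_Ioc_of_le (prevx_le hx hmono j), smul_eq_mul,
    Nat.cast_sub j.isLt.le, div_eq_mul_inv]

theorem setIntegral_inv_numAtLeast_eq_sum (hx : ∀ a, 0 ≤ x a) (hmono : Monotone x)
    (i : Fin t) :
    ∫ r in Set.Ioc 0 (x i), (numAtLeast x r : ℝ)⁻¹ =
      ∑ j ∈ Iic i, (x j - prevx x j) / ((t : ℝ) - (j : ℕ)) := by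
  have hint : ∀ j,
      IntegrableOn (fun r => (numAtLeast x r : ℝ)⁻¹) (Set.Ioc (prevx x j) (x j)) :=
    fun j => (integrableOn_const (C := ((t - j : ℕ) : ℝ)⁻¹) measure_Ioc_lt_top.ne).congr_fun
      (fun r hr => by rw [numAtLeast_eq_of_mem_Ioc_prevx hmono hr]) measurableSet_Ioc
  rw [← biUnion_Ioc_prevx hx hmono i, integral_biUnion_finset _ (fun _ _ => measurableSet_Ioc)
    ((pairwise_disjoint_Ioc_prevx hmono).set_pairwise _) fun j _ => hint j]
  exact sum_congr rfl fun j _ => setIntegral_Ioc_prevx_inv_numAtLeast hx hmono j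

end Sorted

theorem stmt1_general (t : ℕ)
    (x : Fin t → ℝ) (hpos : ∀ i, 0 < x i) (hmono : Monotone x) (i : Fin t) :
    shapley x i =
      ∑ j ∈ Finset.Iic i, (x j - prevx x j) / ((t : ℝ) - (j : ℕ)) ∧
    shapley x i =
      ∫ r in Set.Ioc (0:ℝ) (x i),
        ((Finset.univ.filter fun a : Fin t => r ≤ x a).card : ℝ)⁻¹ := by
  have hx : ∀ a, 0 ≤ x a := fun a => (hpos a).le
  have hintegral := shapley_eq_setIntegral hx i
  exact ⟨hintegral.trans (setIntegral_inv_numAtLeast_eq_sum hx hmono i), hintegral⟩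

/-- for a coalition `{a_1,…,a_t}` sorted by destination with `t ≤ q`,
the Shapley value of agent `a_i` in the game `c S = max_{a∈S} x a` equals
`∑_{j=1}^{i} (x_{a_j} − x_{a_{j−1}})/(t−j+1)`, which also equals
`φ(T, x_{a_i}) = ∫_0^{x_{a_i}} dr / n_T(r)`. -/
theorem stmt1 (t : ℕ) (q : ℕ) (hq : t ≤ q)
    (x : Fin t → ℝ) (hpos : ∀ i, 0 < x i) (hmono : Monotone x) (i : Fin t) :
    shapley x i =
      ∑ j ∈ Finset.Iic i, (x j - prevx x j) / ((t : ℝ) - (j : ℕ)) ∧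
    shapley x i =
      ∫ r in Set.Ioc (0:ℝ) (x i),
        ((Finset.univ.filter fun a : Fin t => r ≤ x a).card : ℝ)⁻¹ :=
  stmt1_general t x hpos hmono i
end

section
/- (Monotonicity lemma) Let 𝒯 be an envy-free feasible allocation and T, T' ∈ 𝒯 be nonempty coalitions. If min_{a∈T} x_a < min_{a'∈T'} x_{a'} then |T| ≥ |T'|; and if min_{a∈T} x_a = min_{a'∈T'} x_{a'} then |T| = |T'|. -/
/-!
If `a` is the agent of `T_i` with the smallest destination and `x_a ≤ min T_j`, then along
`(0, x_a]` every member of `T_i`, and every member of `T_j - b + a`, is still on board, so the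
two costs `φ` of `a` are `x_a / |T_i|` and `x_a / |T_j|`. Envy-freeness of `a` towards any
`b ∈ T_j` then forces `|T_j| ≤ |T_i|`. Applying this in both directions gives the equality case.
-/

open Finset MeasureTheory ENNReal

/-- `Tl` is a partition of the agent set `A` into the (possibly empty) coalitions
of the `k` taxis. -/
def IsPartition (A : Finset ℕ) {k : ℕ} (Tl : Fin k → Finset ℕ) : Prop :=
  (∀ i j, i ≠ j → Disjoint (Tl i) (Tl j)) ∧ Finset.univ.biUnion Tl = A

/-- Feasibility: each coalition respects the capacity of its taxi. -/
def Feasible {k : ℕ} (q : Fin k → ℕ) (Tl : Fin k → Finset ℕ) : Prop :=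
  ∀ i, (Tl i).card ≤ q i

/-- Envy-freeness: no agent `a` can lower her cost by replacing an agent `b`
of another taxi. -/
def EnvyFree (xd : ℕ → ℝ) {k : ℕ} (q : Fin k → ℕ) (Tl : Fin k → Finset ℕ) : Prop :=
  ∀ i j, i ≠ j → ∀ a ∈ Tl i, ∀ b ∈ Tl j,
    taxiCost xd (q i) (Tl i) (xd a) ≤ taxiCost xd (q j) ((Tl j).erase b ∪ {a}) (xd a)

lemma phi_eq_inv_card_mul_of_forall_le (xd : ℕ → ℝ) (T : Finset ℕ) (y : ℝ)
    (h : ∀ c ∈ T, y ≤ xd c) :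
    phi xd T y = (T.card : ℝ≥0∞)⁻¹ * ENNReal.ofReal y := by
  have hn : ∀ r ∈ Set.Ioc (0 : ℝ) y, nT xd T r = T.card := fun r hr =>
    congrArg card (filter_true_of_mem fun c hc => hr.2.trans (h c hc))
  rw [phi, setLIntegral_congr_fun measurableSet_Ioc (fun r hr => by rw [hn r hr]),
    setLIntegral_const, Real.volume_Ioc, sub_zero]

lemma card_erase_union_singleton {α : Type*} [DecidableEq α] {T : Finset α} {a b : α}
    (hb : b ∈ T) (ha : a ∉ T) :
    (T.erase b ∪ {a}).card = T.card := by
  rw [card_union_of_disjoint (by simp [ha]), card_erase_of_mem hb, card_singleton]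
  exact Nat.succ_pred_eq_of_pos (card_pos.2 ⟨b, hb⟩)

lemma EnvyFree.card_le_card_of_forall_le {xd : ℕ → ℝ} {k : ℕ} {q : Fin k → ℕ}
    {Tl : Fin k → Finset ℕ} (hef : EnvyFree xd q Tl) (hfeas : Feasible q Tl)
    {i j : Fin k} (hij : i ≠ j) (hdisj : Disjoint (Tl i) (Tl j)) (hj : (Tl j).Nonempty)
    {a : ℕ} (ha : a ∈ Tl i) (hxa : 0 < xd a)
    (hai : ∀ c ∈ Tl i, xd a ≤ xd c) (haj : ∀ c ∈ Tl j, xd a ≤ xd c) :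
    (Tl j).card ≤ (Tl i).card := by
  obtain ⟨b, hb⟩ := hj
  have hcard := card_erase_union_singleton hb (disjoint_left.1 hdisj ha)
  have hswap : ∀ c ∈ (Tl j).erase b ∪ {a}, xd a ≤ xd c := by
    simp only [mem_union, mem_singleton]
    rintro c (hc | rfl)
    exacts [haj c (mem_of_mem_erase hc), le_rfl]
  have henvy := hef i j hij a ha b hb
  rw [taxiCost, taxiCost, if_pos (hfeas i), if_pos (hcard ▸ hfeas j),
    phi_eq_inv_card_mul_of_forall_le _ _ _ hai, phi_eq_inv_card_mul_of_forall_le _ _ _ hswap,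
    hcard, ENNReal.mul_le_mul_iff_left (by simpa using hxa) ofReal_ne_top] at henvy
  exact_mod_cast ENNReal.inv_le_inv.1 henvy

lemma EnvyFree.card_le_card_of_inf'_le {A : Finset ℕ} {xd : ℕ → ℝ}
    (hpos : ∀ a ∈ A, 0 < xd a) {k : ℕ} {q : Fin k → ℕ} {Tl : Fin k → Finset ℕ}
    (hpart : IsPartition A Tl) (hfeas : Feasible q Tl) (hef : EnvyFree xd q Tl)
    {i j : Fin k} (hi : (Tl i).Nonempty) (hj : (Tl j).Nonempty)
    (hle : (Tl i).inf' hi xd ≤ (Tl j).inf' hj xd) : (Tl j).card ≤ (Tl i).card := by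
  obtain rfl | hij := eq_or_ne i j
  · exact le_rfl
  obtain ⟨a, ha, hxa⟩ := exists_mem_eq_inf' hi xd
  have haA : a ∈ A := hpart.2 ▸ mem_biUnion.2 ⟨i, mem_univ i, ha⟩
  exact hef.card_le_card_of_forall_le hfeas hij (hpart.1 i j hij) hj ha (hpos a haA)
    (fun c hc => hxa ▸ inf'_le xd hc) (fun c hc => hxa ▸ hle.trans (inf'_le xd hc))

theorem stmt3_general (A : Finset ℕ) (xd : ℕ → ℝ) (hpos : ∀ a ∈ A, 0 < xd a)
    (k : ℕ) (q : Fin k → ℕ)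
    (Tl : Fin k → Finset ℕ)
    (hpart : IsPartition A Tl) (hfeas : Feasible q Tl) (hef : EnvyFree xd q Tl)
    (i j : Fin k) (hi : (Tl i).Nonempty) (hj : (Tl j).Nonempty) :
    ((Tl i).inf' hi xd < (Tl j).inf' hj xd → (Tl j).card ≤ (Tl i).card) ∧
    ((Tl i).inf' hi xd = (Tl j).inf' hj xd → (Tl i).card = (Tl j).card) :=
  ⟨fun h => hef.card_le_card_of_inf'_le hpos hpart hfeas hi hj h.le,
    fun h => le_antisymm (hef.card_le_card_of_inf'_le hpos hpart hfeas hj hi h.ge)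
      (hef.card_le_card_of_inf'_le hpos hpart hfeas hi hj h.le)⟩

/-- Monotonicity lemma: in an envy-free feasible allocation, an earlier
first drop-off point means a (weakly) larger coalition, and equal first drop-off
points mean equal sizes. -/
theorem stmt3 (A : Finset ℕ) (xd : ℕ → ℝ) (hpos : ∀ a ∈ A, 0 < xd a)
    (k : ℕ) (q : Fin k → ℕ) (hq : ∀ i j : Fin k, i ≤ j → q j ≤ q i)
    (Tl : Fin k → Finset ℕ)
    (hpart : IsPartition A Tl) (hfeas : Feasible q Tl) (hef : EnvyFree xd q Tl)
    (i j : Fin k) (hi : (Tl i).Nonempty) (hj : (Tl j).Nonempty) :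
    ((Tl i).inf' hi xd < (Tl j).inf' hj xd → (Tl j).card ≤ (Tl i).card) ∧
    ((Tl i).inf' hi xd = (Tl j).inf' hj xd → (Tl i).card = (Tl j).card) :=
  stmt3_general A xd hpos k q Tl hpart hfeas hef i j hi hj
end

section
/- (Split lemma, part iii) Let 𝒯 be an envy-free feasible allocation with distinct coalitions T, T' each containing agents of type x, no agents of type < x, and |T| = |T'|. If the number of type-x agents in T equals that in T', then T and T' consist entirely of type-x agents, i.e., T = T_{=x} and T' = T'_{=x}. -/
open Finset MeasureTheory ENNReal

/-!
Suppose some agent of `T ∪ T'` travels beyond `x`, and let `c` be one with the smallest such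
destination `y`, say `c ∈ T`. Swapping `c` for a type-`x` agent `b` of `T'` yields a coalition
`S` of the same size. On `(0, x]` everybody rides, so `n_S = n_T`; on `(x, y]` nobody leaves, so
`n_T = |T| - |T_{=x}| = |T'| - |T'_{=x}|`, while `n_S` is one larger (`c` rides, `b` does not).
As `0 < x < y`, this gives `φ(S, y) < φ(T, y)`, so `c` envies `b`.
-/

section

variable {xd : ℕ → ℝ}

lemma nT_antitone (U : Finset ℕ) : Antitone (nT xd U) := fun _ _ hrs =>
  card_le_card <| monotone_filter_right U fun _ _ h => hrs.trans h

lemma nT_of_le_min {U : Finset ℕ} {x r : ℝ} (hU : ∀ d ∈ U, x ≤ xd d) (hr : r ≤ x) :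
    nT xd U r = #U := by
  rw [nT, filter_true_of_mem fun d hd => hr.trans (hU d hd)]

lemma nT_of_mem_Ioc {U : Finset ℕ} {x y r : ℝ} (hU : ∀ d ∈ U, x ≤ xd d)
    (hgap : ∀ d ∈ U, x < xd d → y ≤ xd d) (hr : r ∈ Set.Ioc x y) :
    nT xd U r = #U - #(U.filter fun d => xd d = x) := by
  have : U.filter (fun d => r ≤ xd d) = U.filter fun d => ¬ xd d = x :=
    filter_congr fun d hd =>
      ⟨fun h => (hr.1.trans_le h).ne', fun h => hr.2.trans (hgap d hd ((hU d hd).lt_of_ne' h))⟩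
  rw [nT, this, filter_not, card_sdiff_of_subset (filter_subset _ _)]

lemma nT_eq_of_card_eq {U V : Finset ℕ} {x y r : ℝ}
    (hU : ∀ d ∈ U, x ≤ xd d) (hUgap : ∀ d ∈ U, x < xd d → y ≤ xd d)
    (hV : ∀ d ∈ V, x ≤ xd d) (hVgap : ∀ d ∈ V, x < xd d → y ≤ xd d) (hry : r ≤ y)
    (hcard : #U = #V) (hsplit : #(U.filter fun d => xd d = x) = #(V.filter fun d => xd d = x)) :
    nT xd U r = nT xd V r := by
  rcases le_or_gt r x with hrx | hxr
  · rw [nT_of_le_min hU hrx, nT_of_le_min hV hrx, hcard]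
  · rw [nT_of_mem_Ioc hU hUgap ⟨hxr, hry⟩, nT_of_mem_Ioc hV hVgap ⟨hxr, hry⟩, hcard, hsplit]

lemma nT_swap_add {U : Finset ℕ} {b c : ℕ} (hb : b ∈ U) (hc : c ∉ U) (r : ℝ) :
    nT xd (U.erase b ∪ {c}) r + (if r ≤ xd b then 1 else 0)
      = nT xd U r + (if r ≤ xd c then 1 else 0) := by
  have hcF : c ∉ (U.filter fun d => r ≤ xd d).erase b := fun h =>
    hc (mem_of_mem_filter c (mem_of_mem_erase h))
  rw [nT, nT, filter_union, filter_erase, filter_singleton]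
  split_ifs with hrc hrb hrb
  · rw [card_union_of_disjoint (disjoint_singleton_right.2 hcF), card_singleton,
      card_erase_add_one (mem_filter.2 ⟨hb, hrb⟩)]
  · rw [erase_eq_of_notMem (a := b) fun h => hrb (mem_filter.1 h).2, card_union_of_disjoint
      (disjoint_singleton_right.2 fun h => hc (mem_of_mem_filter c h)), card_singleton, add_zero]
  · rw [union_empty, card_erase_add_one (mem_filter.2 ⟨hb, hrb⟩), add_zero]
  · simp [hrb]

lemma phi_lt_phi_of_nT_lt {U V : Finset ℕ} {x y : ℝ} (hx : 0 ≤ x) (hxy : x < y) (hV : 0 < nT xd V y)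
    (hle : ∀ r ∈ Set.Ioc 0 y, nT xd U r ≤ nT xd V r)
    (hlt : ∀ r ∈ Set.Ioc x y, nT xd U r < nT xd V r) :
    phi xd V y < phi xd U y := by
  have hmono : Monotone fun r => (nT xd U r : ℝ≥0∞)⁻¹ := fun _ _ hrs =>
    ENNReal.inv_le_inv.2 (Nat.cast_le.2 (nT_antitone U hrs))
  have hfin : phi xd V y ≠ ∞ := by
    refine ne_top_of_le_ne_top (b := ∫⁻ _ in Set.Ioc 0 y, 1) (by simp) ?_
    refine setLIntegral_mono measurable_const fun r hr => ?_
    exact ENNReal.inv_le_one.2 (Nat.one_le_cast.2 (hV.trans_le (nT_antitone V hr.2)))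
  refine lintegral_strict_mono_of_ae_le_of_ae_lt_on hmono.measurable.aemeasurable hfin
    ((ae_restrict_iff' measurableSet_Ioc).2 (.of_forall fun r hr =>
      ENNReal.inv_le_inv.2 (Nat.cast_le.2 (hle r hr)))) (s := Set.Ioc x y) ?_
    (.of_forall fun r hr => ENNReal.inv_lt_inv.2 (Nat.cast_lt.2 (hlt r hr)))
  rw [Measure.restrict_apply measurableSet_Ioc, Set.inter_eq_left.2 (Set.Ioc_subset_Ioc_left hx),
    Real.volume_Ioc]
  exact (ENNReal.ofReal_pos.2 (sub_pos.2 hxy)).ne'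

lemma card_erase_union_singleton_s5 {U : Finset ℕ} {b c : ℕ} (hb : b ∈ U) (hc : c ∉ U) :
    #(U.erase b ∪ {c}) = #U := by
  rw [card_union_of_disjoint (disjoint_singleton_right.2 fun h => hc (mem_of_mem_erase h)),
    card_singleton, card_erase_add_one hb]

lemma phi_swap_lt {T T' : Finset ℕ} {x : ℝ} {b c : ℕ} (hx : 0 < x)
    (hb : b ∈ T') (hbx : xd b = x) (hcT' : c ∉ T') (hcx : x < xd c)
    (hT : ∀ d ∈ T, x ≤ xd d) (hT' : ∀ d ∈ T', x ≤ xd d)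
    (hgap : ∀ d ∈ T ∪ T', x < xd d → xd c ≤ xd d) (hcard : #T = #T')
    (hsplit : #(T.filter fun d => xd d = x) = #(T'.filter fun d => xd d = x)) :
    phi xd (T'.erase b ∪ {c}) (xd c) < phi xd T (xd c) := by
  have hswap := nT_swap_add (xd := xd) hb hcT'
  have heq : ∀ r ≤ xd c, nT xd T r = nT xd T' r := fun r hr =>
    nT_eq_of_card_eq hT (fun d hd => hgap d (mem_union_left _ hd)) hT'
      (fun d hd => hgap d (mem_union_right _ hd)) hr hcard hsplit
  refine phi_lt_phi_of_nT_lt hx.le hcx ?_ (fun r hr => ?_) (fun r hr => ?_)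
  · have := hswap (xd c)
    rw [if_pos le_rfl, if_neg (by linarith)] at this
    omega
  · have := hswap r
    rw [if_pos hr.2] at this
    rw [heq r hr.2]
    split_ifs at this <;> omega
  · have := hswap r
    rw [if_pos hr.2, if_neg (hbx ▸ hr.1.not_ge)] at this
    rw [heq r hr.2]
    omega

lemma EnvyFree.phi_le_phi_swap {A : Finset ℕ} {k : ℕ} {q : Fin k → ℕ} {Tl : Fin k → Finset ℕ}
    (hef : EnvyFree xd q Tl) (hpart : IsPartition A Tl) (hfeas : Feasible q Tl) {i j : Fin k}
    (hij : i ≠ j) {b c : ℕ} (hb : b ∈ Tl j) (hc : c ∈ Tl i) :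
    phi xd (Tl i) (xd c) ≤ phi xd ((Tl j).erase b ∪ {c}) (xd c) := by
  have hcj : c ∉ Tl j := disjoint_left.1 (hpart.1 i j hij) hc
  have hswap := hef i j hij c hc b hb
  rwa [taxiCost, taxiCost, if_pos (hfeas i),
    if_pos ((card_erase_union_singleton_s5 hb hcj).trans_le (hfeas j))] at hswap

lemma EnvyFree.exists_between_of_split_eq {A : Finset ℕ} (hpos : ∀ a ∈ A, 0 < xd a) {k : ℕ}
    {q : Fin k → ℕ} {Tl : Fin k → Finset ℕ} (hef : EnvyFree xd q Tl) (hpart : IsPartition A Tl)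
    (hfeas : Feasible q Tl) {i j : Fin k} (hij : i ≠ j) {x : ℝ} {b c : ℕ}
    (hb : b ∈ Tl j) (hbx : xd b = x) (hc : c ∈ Tl i) (hcx : x < xd c)
    (hlo1 : ∀ d ∈ Tl i, x ≤ xd d) (hlo2 : ∀ d ∈ Tl j, x ≤ xd d) (hcard : #(Tl i) = #(Tl j))
    (hsplit : #((Tl i).filter fun d => xd d = x) = #((Tl j).filter fun d => xd d = x)) :
    ∃ d ∈ Tl i ∪ Tl j, x < xd d ∧ xd d < xd c := by
  have hx : 0 < x := hbx ▸ hpos b (hpart.2 ▸ mem_biUnion.2 ⟨j, mem_univ j, hb⟩)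
  by_contra! hgap
  exact (hef.phi_le_phi_swap hpart hfeas hij hb hc).not_gt <| phi_swap_lt hx hb hbx
    (disjoint_left.1 (hpart.1 i j hij) hc) hcx hlo1 hlo2 hgap hcard hsplit

end

theorem stmt5_general (A : Finset ℕ) (xd : ℕ → ℝ) (hpos : ∀ a ∈ A, 0 < xd a)
    (k : ℕ) (q : Fin k → ℕ)
    (Tl : Fin k → Finset ℕ)
    (hpart : IsPartition A Tl) (hfeas : Feasible q Tl) (hef : EnvyFree xd q Tl)
    (i j : Fin k) (hij : i ≠ j) (x : ℝ) (a b : ℕ)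
    (ha : a ∈ Tl i) (hb : b ∈ Tl j) (hax : xd a = x) (hbx : xd b = x)
    (hlo1 : ∀ c ∈ Tl i, ¬ xd c < x) (hlo2 : ∀ c ∈ Tl j, ¬ xd c < x)
    (hcard : (Tl i).card = (Tl j).card)
    (hsplit : ((Tl i).filter fun c => xd c = x).card
              = ((Tl j).filter fun c => xd c = x).card) :
    (∀ c ∈ Tl i, xd c = x) ∧ (∀ c ∈ Tl j, xd c = x) := by
  have hle1 : ∀ c ∈ Tl i, x ≤ xd c := fun c hc => not_lt.1 (hlo1 c hc)
  have hle2 : ∀ c ∈ Tl j, x ≤ xd c := fun c hc => not_lt.1 (hlo2 c hc)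
  suffices h : ∀ c ∈ Tl i ∪ Tl j, ¬ x < xd c from
    ⟨fun c hc => (hle1 c hc).antisymm' (not_lt.1 (h c (mem_union_left _ hc))),
      fun c hc => (hle2 c hc).antisymm' (not_lt.1 (h c (mem_union_right _ hc)))⟩
  intro d hd hdx
  obtain ⟨c, hc, hmin⟩ := ((Tl i ∪ Tl j).filter (x < xd ·)).exists_min_image xd
    ⟨d, mem_filter.2 ⟨hd, hdx⟩⟩
  obtain ⟨e, he, hex, hec⟩ : ∃ e ∈ Tl i ∪ Tl j, x < xd e ∧ xd e < xd c := by
    rcases mem_union.1 (mem_filter.1 hc).1 with hci | hcj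
    · exact hef.exists_between_of_split_eq hpos hpart hfeas hij hb hbx hci (mem_filter.1 hc).2
        hle1 hle2 hcard hsplit
    · rw [union_comm]
      exact hef.exists_between_of_split_eq hpos hpart hfeas hij.symm ha hax hcj
        (mem_filter.1 hc).2 hle2 hle1 hcard.symm hsplit.symm
  exact (hmin e (mem_filter.2 ⟨he, hex⟩)).not_gt hec

/-- Split lemma, part iii: if two distinct coalitions of an envy-free
feasible allocation both contain agents of type `x`, contain no agents of type `< x`,
have equal size, and contain equally many type-`x` agents, then both coalitions
consist entirely of type-`x` agents. -/
theorem stmt5 (A : Finset ℕ) (xd : ℕ → ℝ) (hpos : ∀ a ∈ A, 0 < xd a)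
    (k : ℕ) (q : Fin k → ℕ) (hq : ∀ i j : Fin k, i ≤ j → q j ≤ q i)
    (Tl : Fin k → Finset ℕ)
    (hpart : IsPartition A Tl) (hfeas : Feasible q Tl) (hef : EnvyFree xd q Tl)
    (i j : Fin k) (hij : i ≠ j) (x : ℝ) (a b : ℕ)
    (ha : a ∈ Tl i) (hb : b ∈ Tl j) (hax : xd a = x) (hbx : xd b = x)
    (hlo1 : ∀ c ∈ Tl i, ¬ xd c < x) (hlo2 : ∀ c ∈ Tl j, ¬ xd c < x)
    (hcard : (Tl i).card = (Tl j).card)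
    (hsplit : ((Tl i).filter fun c => xd c = x).card
              = ((Tl j).filter fun c => xd c = x).card) :
    (∀ c ∈ Tl i, xd c = x) ∧ (∀ c ∈ Tl j, xd c = x) :=
  stmt5_general A xd hpos k q Tl hpart hfeas hef i j hij x a b ha hb hax hbx hlo1 hlo2 hcard hsplit
end

section
/- For any coalition T and x > 0 with n_T(x) > 0, φ(T, x) = ψ(T_{<x}, x, |T|), where ψ(S, x, μ) = ∫_0^x dr / (n_S(r) + μ − |S|). That is, the Shapley cost of a passenger dropping at point x depends only on the set of agents in T with destination < x and the total size of T. -/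
open Finset MeasureTheory ENNReal

/-- `ψ(S, y, μ) = ∫_0^y dr / (n_S(r) + μ − |S|)`. -/
noncomputable def psi (xd : ℕ → ℝ) (S : Finset ℕ) (y : ℝ) (μ : ℕ) : ℝ≥0∞ :=
  ∫⁻ r in Set.Ioc (0:ℝ) y, ((nT xd S r + μ - S.card : ℕ) : ℝ≥0∞)⁻¹

lemma nT_eq_nT_filter_lt_add_card_filter_le (xd : ℕ → ℝ) (T : Finset ℕ) {x r : ℝ}
    (hr : r ≤ x) :
    nT xd T r = nT xd (T.filter fun a => xd a < x) r + (T.filter fun a => x ≤ xd a).card := by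
  unfold nT
  rw [← card_filter_add_card_filter_not (s := T.filter fun a => r ≤ xd a) (fun a => xd a < x),
    filter_filter, filter_filter, filter_filter]
  congr 2
  · ext a
    simp only [mem_filter, and_comm]
  · ext a
    simp only [mem_filter, not_lt]
    exact ⟨fun h => ⟨h.1, h.2.2⟩, fun h => ⟨h.1, hr.trans h.2, h.2⟩⟩

theorem stmt7_general (xd : ℕ → ℝ) (T : Finset ℕ) (x : ℝ) :
    phi xd T x = psi xd (T.filter fun a => xd a < x) x T.card := by
  refine setLIntegral_congr_fun measurableSet_Ioc fun r hr => ?_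
  have hcard := card_filter_add_card_filter_not (s := T) (fun a => xd a < x)
  simp only [not_lt] at hcard
  rw [nT_eq_nT_filter_lt_add_card_filter_le xd T hr.2]
  congr 2
  omega

/-- the Shapley cost of a passenger dropping at `x` depends only on the
members with destination `< x` and the total coalition size:
`φ(T,x) = ψ(T_{<x}, x, |T|)`. -/
theorem stmt7 (xd : ℕ → ℝ) (T : Finset ℕ) (x : ℝ) (hx : 0 < x)
    (hn : 0 < nT xd T x) :
    phi xd T x = psi xd (T.filter fun a => xd a < x) x T.card :=
  stmt7_general xd T x
end

section
/- If three agents all with the same destination x > 0 must be allocated to two taxis of capacities 1 and 2, then no feasible allocation is envy-free: the agent riding alone envies each of the two agents sharing the other taxi. -/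
open Finset MeasureTheory ENNReal

/-! When every rider of a coalition travels at least as far as `y`, the cost share up to `y` is
`y / #T`. The lone rider thus pays `x`, whereas in place of a member of the full taxi she would
share the whole ride with one other agent and pay `x / 2`. -/

section TaxiCost

variable {xd : ℕ → ℝ} {T S : Finset ℕ} {y : ℝ}

lemma nT_eq_card (h : ∀ c ∈ T, y ≤ xd c) {r : ℝ} (hr : r ≤ y) : nT xd T r = #T := by
  rw [nT, filter_true_of_mem fun c hc => hr.trans (h c hc)]

lemma phi_eq_inv_card_mul (h : ∀ c ∈ T, y ≤ xd c) :
    phi xd T y = (#T : ℝ≥0∞)⁻¹ * ENNReal.ofReal y := by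
  rw [phi, setLIntegral_congr_fun measurableSet_Ioc fun r hr => by rw [nT_eq_card h hr.2],
    setLIntegral_const, Real.volume_Ioc, sub_zero]

lemma phi_lt_phi_of_card_lt (hy : 0 < y) (hS : ∀ c ∈ S, y ≤ xd c) (hT : ∀ c ∈ T, y ≤ xd c)
    (hcard : #T < #S) : phi xd S y < phi xd T y := by
  rw [phi_eq_inv_card_mul hS, phi_eq_inv_card_mul hT,
    ENNReal.mul_lt_mul_iff_left (ENNReal.ofReal_pos.2 hy).ne' ENNReal.ofReal_ne_top,
    ENNReal.inv_lt_inv]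
  exact_mod_cast hcard

lemma taxiCost_of_card_le {q : ℕ} (h : #T ≤ q) : taxiCost xd q T y = phi xd T y :=
  if_pos h

lemma phi_le_taxiCost (q : ℕ) : phi xd T y ≤ taxiCost xd q T y := by
  unfold taxiCost
  split_ifs
  exacts [le_rfl, le_top]

end TaxiCost

theorem stmt8_general (x : ℝ) (hx : 0 < x) (xd : ℕ → ℝ)
    (hxd : ∀ a ∈ ({0, 1, 2} : Finset ℕ), xd a = x)
    (T1 T2 : Finset ℕ) (hdisj : Disjoint T1 T2)
    (hunion : T1 ∪ T2 = ({0, 1, 2} : Finset ℕ))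
    (hc2 : T2.card ≤ 1) :
    ∀ a ∈ T2, ∀ b ∈ T1,
      taxiCost xd 2 (T1.erase b ∪ {a}) (xd a) < taxiCost xd 1 T2 (xd a) := by
  intro a ha b hb
  have hT2 : #T2 = 1 := le_antisymm hc2 (card_pos.2 ⟨a, ha⟩)
  have hT1 : #T1 = 2 := by
    have := card_union_of_disjoint hdisj
    rw [hunion, hT2] at this
    simpa using this
  have haT1 : a ∉ T1 := disjoint_right.1 hdisj ha
  have hS : #(T1.erase b ∪ {a}) = 2 := by
    rw [card_union_of_disjoint (disjoint_singleton_right.2 fun h => haT1 (mem_of_mem_erase h)),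
      card_erase_of_mem hb, card_singleton, hT1]
  have hxa : xd a = x := hxd a (hunion ▸ mem_union_right T1 ha)
  have hdest : ∀ c ∈ T1 ∪ T2, xd a ≤ xd c := by
    rw [hunion, hxa]
    exact fun c hc => (hxd c hc).ge
  calc taxiCost xd 2 (T1.erase b ∪ {a}) (xd a) = phi xd (T1.erase b ∪ {a}) (xd a) :=
        taxiCost_of_card_le hS.le
    _ < phi xd T2 (xd a) := by
        refine phi_lt_phi_of_card_lt (hxa ▸ hx) (fun c hc => hdest c ?_)
          (fun c hc => hdest c (mem_union_right T1 hc)) (by omega)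
        exact union_subset_union (erase_subset b T1) (singleton_subset_iff.2 ha) hc
    _ ≤ taxiCost xd 1 T2 (xd a) := phi_le_taxiCost 1

/-- three agents with the same destination `x > 0` in two taxis of
capacities 2 and 1: in every feasible allocation the agent riding alone envies each of
the two agents sharing the other taxi, so no feasible allocation is envy-free. -/
theorem stmt8 (x : ℝ) (hx : 0 < x) (xd : ℕ → ℝ)
    (hxd : ∀ a ∈ ({0, 1, 2} : Finset ℕ), xd a = x)
    (T1 T2 : Finset ℕ) (hdisj : Disjoint T1 T2)
    (hunion : T1 ∪ T2 = ({0, 1, 2} : Finset ℕ))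
    (hc1 : T1.card ≤ 2) (hc2 : T2.card ≤ 1) :
    ∀ a ∈ T2, ∀ b ∈ T1,
      taxiCost xd 2 (T1.erase b ∪ {a}) (xd a) < taxiCost xd 1 T2 (xd a) :=
  stmt8_general x hx xd hxd T1 T2 hdisj hunion hc2
end

section
/- (Backward greedy is socially optimal) Among all feasible allocations (partitions of agents into coalitions T_i with |T_i| ≤ q_i, where q_1 ≥ … ≥ q_k), the backward greedy allocation minimizes the total cost ∑_{i : T_i ≠ ∅} max_{a ∈ T_i} x_a. Moreover, the nonincreasing sequence of last drop-off points of any socially optimal feasible allocation equals that of the backward greedy allocation. -/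
/-!
Let `c_j` be the number of seats in the `j` largest taxis. In a feasible allocation the
`c_j + 1` furthest agents need more than `c_j` seats, so at least `j + 1` taxis drive as far as
`x (n - c_j)`, the last drop-off point of greedy taxi `j + 1`. Hence the nonincreasingly sorted
drop-off points of any feasible allocation dominate those of the greedy allocation entrywise:
summing gives optimality, and equal sums force equal entries.
-/

open Finset MeasureTheory ENNReal

/-- Total capacity of taxis `1, …, i`. -/
def cumQ (q : ℕ → ℕ) (i : ℕ) : ℕ := ∑ j ∈ Finset.Icc 1 i, q j

/-- The backward greedy allocation for agents `1, …, n` sorted nondecreasingly: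
taxi `1` gets the `q 1` furthest agents, taxi `2` the next `q 2` furthest, etc. -/
def greedyT (n : ℕ) (q : ℕ → ℕ) (i : ℕ) : Finset ℕ :=
  Finset.Icc (max 1 (n + 1 - cumQ q i)) (n - cumQ q (i - 1))

/-- Furthest destination of a coalition (`0` for the empty coalition). -/
noncomputable def maxdest (x : ℕ → ℝ) (T : Finset ℕ) : ℝ := WithBot.unbotD 0 ((T.image x).max)

/-- `Sl` is a feasible allocation of the agents `1, …, n` into `k` taxis of
capacities `q 1 ≥ … ≥ q k`. -/
def FeasAlloc (n k : ℕ) (q : ℕ → ℕ) (Sl : ℕ → Finset ℕ) : Prop :=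
  (∀ i ∈ Finset.Icc 1 k, (Sl i).card ≤ q i) ∧
  (∀ i ∈ Finset.Icc 1 k, ∀ j ∈ Finset.Icc 1 k, i ≠ j → Disjoint (Sl i) (Sl j)) ∧
  (Finset.Icc 1 k).biUnion Sl = Finset.Icc 1 n

lemma cumQ_succ (q : ℕ → ℕ) (i : ℕ) : cumQ q (i + 1) = cumQ q i + q (i + 1) := by
  rw [cumQ, cumQ, Finset.sum_Icc_succ_top (by omega)]

lemma cumQ_mono (q : ℕ → ℕ) : Monotone (cumQ q) :=
  monotone_nat_of_le_succ fun i => by rw [cumQ_succ]; omega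

lemma sum_le_cumQ_card {k : ℕ} {q : ℕ → ℕ} (hq : AntitoneOn q (Set.Icc 1 k))
    {I : Finset ℕ} (hI : I ⊆ Finset.Icc 1 k) : ∑ i ∈ I, q i ≤ cumQ q #I := by
  induction I using Finset.induction_on_max with
  | empty => simp
  | insert a s hlt ih =>
    have has : a ∉ s := fun h => lt_irrefl a (hlt a h)
    have ha := Finset.mem_Icc.mp (hI (Finset.mem_insert_self a s))
    have hs_card : #s + 1 ≤ a := by
      have : s ⊆ Finset.Ico 1 a := fun b hb =>
        Finset.mem_Ico.mpr ⟨(Finset.mem_Icc.mp (hI (Finset.mem_insert_of_mem hb))).1, hlt b hb⟩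
      have := Finset.card_le_card this
      rw [Nat.card_Ico] at this
      omega
    have hqa : q a ≤ q (#s + 1) := hq ⟨by omega, by omega⟩ ha hs_card
    have ih := ih ((Finset.subset_insert a s).trans hI)
    rw [Finset.sum_insert has, Finset.card_insert_of_notMem has, cumQ_succ]
    omega

lemma maxdest_empty (x : ℕ → ℝ) : maxdest x ∅ = 0 := rfl

lemma maxdest_eq_max' (x : ℕ → ℝ) {T : Finset ℕ} (hT : T.Nonempty) :
    maxdest x T = (T.image x).max' (hT.image x) := by
  rw [maxdest, ← Finset.coe_max' (hT.image x)]
  rfl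

lemma le_maxdest (x : ℕ → ℝ) {T : Finset ℕ} {a : ℕ} (ha : a ∈ T) : x a ≤ maxdest x T := by
  rw [maxdest_eq_max' x ⟨a, ha⟩]
  exact Finset.le_max' _ _ (Finset.mem_image_of_mem x ha)

lemma maxdest_nonneg {x : ℕ → ℝ} {T : Finset ℕ} (hx : ∀ a ∈ T, 0 ≤ x a) : 0 ≤ maxdest x T := by
  rcases T.eq_empty_or_nonempty with rfl | ⟨a, ha⟩
  · exact le_rfl
  · exact (hx a ha).trans (le_maxdest x ha)

lemma maxdest_Icc {x : ℕ → ℝ} {a b : ℕ} (hx : MonotoneOn x (Set.Icc a b)) (hab : a ≤ b) :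
    maxdest x (Finset.Icc a b) = x b := by
  have hb : b ∈ Finset.Icc a b := Finset.mem_Icc.mpr ⟨hab, le_rfl⟩
  refine le_antisymm ?_ (le_maxdest x hb)
  rw [maxdest_eq_max' x ⟨b, hb⟩]
  refine Finset.max'_le _ _ _ fun y hy => ?_
  obtain ⟨c, hc, rfl⟩ := Finset.mem_image.mp hy
  exact hx (Finset.mem_Icc.mp hc) (Finset.mem_Icc.mp hb) (Finset.mem_Icc.mp hc).2

lemma greedyT_feasAlloc {n k : ℕ} {q : ℕ → ℕ} (hfeas : n ≤ cumQ q k) :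
    FeasAlloc n k q (greedyT n q) := by
  refine ⟨fun i hi => ?_, fun i hi j hj hij => ?_, ?_⟩
  · have := cumQ_succ q (i - 1)
    rw [Nat.sub_add_cancel (Finset.mem_Icc.mp hi).1] at this
    rw [greedyT, Nat.card_Icc]
    omega
  · wlog h : i < j generalizing i j
    · exact (this j hj i hi hij.symm (by omega)).symm
    have hm : cumQ q i ≤ cumQ q (j - 1) := cumQ_mono q (by omega)
    rw [Finset.disjoint_left]
    intro a ha ha'
    simp only [greedyT, Finset.mem_Icc, max_le_iff] at ha ha'
    omega
  · ext a
    simp only [Finset.mem_biUnion, Finset.mem_Icc, greedyT, max_le_iff]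
    constructor
    · rintro ⟨i, -, ha⟩
      omega
    · rintro ⟨h1, h2⟩
      -- `a` goes to the first taxi whose cumulative capacity covers the agents `a, …, n`
      have hex : ∃ i, n + 1 - a ≤ cumQ q i := ⟨k, by omega⟩
      have hfind : n + 1 - a ≤ cumQ q (Nat.find hex) := Nat.find_spec hex
      have hk : Nat.find hex ≤ k := Nat.find_le (by omega)
      have h0 : Nat.find hex ≠ 0 := by
        intro h0
        rw [h0, cumQ, Finset.Icc_eq_empty (by omega), Finset.sum_empty] at hfind
        omega
      have hmin : ¬ n + 1 - a ≤ cumQ q (Nat.find hex - 1) := Nat.find_min hex (by omega)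
      exact ⟨Nat.find hex, ⟨by omega, hk⟩, ⟨by omega, by omega⟩, by omega⟩

lemma maxdest_greedyT_of_nonempty {n : ℕ} {x : ℕ → ℝ} (hx : MonotoneOn x (Set.Icc 1 n))
    {q : ℕ → ℕ} {i : ℕ} (hne : (greedyT n q (i + 1)).Nonempty) :
    cumQ q i < n ∧ maxdest x (greedyT n q (i + 1)) = x (n - cumQ q i) := by
  obtain ⟨a, ha⟩ := hne
  simp only [greedyT, Nat.add_sub_cancel, Finset.mem_Icc, max_le_iff] at ha ⊢
  refine ⟨by omega, maxdest_Icc (hx.mono fun b hb => ⟨?_, ?_⟩) (by omega)⟩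
  · exact le_trans (le_max_left _ _) hb.1
  · exact hb.2.trans (Nat.sub_le n _)

/-- The `c + 1` agents `n - c, …, n` all ride in taxis that reach `x (n - c)`. -/
lemma lt_sum_capacity_of_le_maxdest {n k : ℕ} {x : ℕ → ℝ} (hx : MonotoneOn x (Set.Icc 1 n))
    {q : ℕ → ℕ} {Sl : ℕ → Finset ℕ} (hS : FeasAlloc n k q Sl) {c : ℕ} (hc : c < n) :
    c < ∑ i ∈ (Finset.Icc 1 k).filter (fun i => x (n - c) ≤ maxdest x (Sl i)), q i := by
  obtain ⟨hcard, -, hunion⟩ := hS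
  set I := (Finset.Icc 1 k).filter (fun i => x (n - c) ≤ maxdest x (Sl i))
  have htop : Finset.Icc (n - c) n ⊆ I.biUnion Sl := by
    intro a ha
    have ha' := Finset.mem_Icc.mp ha
    obtain ⟨i, hi, hai⟩ := Finset.mem_biUnion.mp
      (hunion ▸ Finset.mem_Icc.mpr ⟨by omega, ha'.2⟩ : a ∈ (Finset.Icc 1 k).biUnion Sl)
    refine Finset.mem_biUnion.mpr ⟨i, Finset.mem_filter.mpr ⟨hi, ?_⟩, hai⟩
    exact (hx ⟨by omega, by omega⟩ ⟨by omega, ha'.2⟩ ha'.1).trans (le_maxdest x hai)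
  calc c < #(Finset.Icc (n - c) n) := by rw [Nat.card_Icc]; omega
    _ ≤ #(I.biUnion Sl) := Finset.card_le_card htop
    _ ≤ ∑ i ∈ I, #(Sl i) := Finset.card_biUnion_le
    _ ≤ ∑ i ∈ I, q i := Finset.sum_le_sum fun i hi => hcard i (Finset.mem_filter.mp hi).1

lemma le_getElem_of_lt_countP {α : Type*} [LinearOrder α] {t : α} {l : List α}
    (hl : l.Pairwise (· ≥ ·)) {j : ℕ} (hj : j < l.length)
    (hcount : j < l.countP (fun v => t ≤ v)) : t ≤ l[j] := by
  induction l generalizing j with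
  | nil => simp at hj
  | cons a l ih =>
    obtain ⟨ha, hl⟩ := List.pairwise_cons.mp hl
    cases j with
    | zero =>
      by_contra! hta
      have : (a :: l).countP (fun v => t ≤ v) = 0 := by
        refine List.countP_eq_zero.mpr fun v hv => ?_
        rcases List.mem_cons.mp hv with rfl | hv
        · simpa using hta
        · simpa using (ha v hv).trans_lt hta
      omega
    | succ j =>
      rw [List.countP_cons] at hcount
      exact ih hl (by simpa using hj) (by split at hcount <;> omega)

lemma List.Forall₂.eq_of_sum_le {M : Type*} [AddCommMonoid M] [LinearOrder M]
    [IsOrderedCancelAddMonoid M] {l₁ l₂ : List M} (h : List.Forall₂ (· ≤ ·) l₁ l₂)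
    (hsum : l₂.sum ≤ l₁.sum) : l₁ = l₂ := by
  induction h with
  | nil => rfl
  | @cons a b l₁ l₂ hab h ih =>
    rw [List.sum_cons, List.sum_cons] at hsum
    have hle := h.sum_le_sum
    have hba : a = b := hab.antisymm (not_lt.mp fun hlt =>
      hsum.not_gt (add_lt_add_of_lt_of_le hlt hle))
    rw [hba, ih (le_of_add_le_add_left (hba ▸ hsum))]

noncomputable def sortedDrops (x : ℕ → ℝ) (k : ℕ) (Sl : ℕ → Finset ℕ) : List ℝ :=
  ((Finset.Icc 1 k).val.map fun i => maxdest x (Sl i)).sort (· ≥ ·)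

lemma coe_sortedDrops (x : ℕ → ℝ) (k : ℕ) (Sl : ℕ → Finset ℕ) :
    (sortedDrops x k Sl : Multiset ℝ) = (Finset.Icc 1 k).val.map fun i => maxdest x (Sl i) :=
  Multiset.sort_eq _ _

lemma sum_eq_sum_sortedDrops (x : ℕ → ℝ) (k : ℕ) (Sl : ℕ → Finset ℕ) :
    ∑ i ∈ Finset.Icc 1 k, maxdest x (Sl i) = (sortedDrops x k Sl).sum := by
  rw [Finset.sum_eq_multiset_sum, ← coe_sortedDrops, Multiset.sum_coe]

lemma countP_sortedDrops (x : ℕ → ℝ) (k : ℕ) (Sl : ℕ → Finset ℕ) (t : ℝ) :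
    (sortedDrops x k Sl).countP (fun v => t ≤ v)
      = #((Finset.Icc 1 k).filter fun i => t ≤ maxdest x (Sl i)) := by
  rw [← Multiset.coe_countP, coe_sortedDrops, Multiset.countP_map]
  rfl

lemma coe_map_range'_one {α : Type*} (k : ℕ) (f : ℕ → α) :
    (((List.range' 1 k).map f : List α) : Multiset α) = (Finset.Icc 1 k).val.map f := by
  rw [← Multiset.map_coe, Nat.Icc_eq_range', Nat.add_sub_cancel]

lemma sum_Icc_one_eq_sum_map_range' {M : Type*} [AddCommMonoid M] (k : ℕ) (f : ℕ → M) :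
    ∑ i ∈ Finset.Icc 1 k, f i = ((List.range' 1 k).map f).sum := by
  rw [Finset.sum_eq_multiset_sum, ← coe_map_range'_one, Multiset.sum_coe]

lemma forall₂_greedy_le_sortedDrops {n k : ℕ} {x : ℕ → ℝ} (hx₀ : ∀ a ∈ Finset.Icc 1 n, 0 ≤ x a)
    (hx : MonotoneOn x (Set.Icc 1 n)) {q : ℕ → ℕ} (hq : AntitoneOn q (Set.Icc 1 k))
    {Sl : ℕ → Finset ℕ} (hS : FeasAlloc n k q Sl) :
    List.Forall₂ (· ≤ ·) ((List.range' 1 k).map fun i => maxdest x (greedyT n q i))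
      (sortedDrops x k Sl) := by
  have hlen : (sortedDrops x k Sl).length = k := by
    rw [sortedDrops, Multiset.length_sort, Multiset.card_map, Finset.card_val, Nat.card_Icc,
      Nat.add_sub_cancel]
  refine List.forall₂_of_length_eq_of_get (by simp [hlen]) fun i hi _ => ?_
  simp only [List.get_eq_getElem, List.getElem_map, List.getElem_range', one_mul,
    add_comm 1 i]
  rcases (greedyT n q (i + 1)).eq_empty_or_nonempty with hempty | hne
  · rw [hempty, maxdest_empty]
    obtain ⟨j, hj, hjv⟩ := Multiset.mem_map.mp
      (coe_sortedDrops x k Sl ▸ Multiset.mem_coe.mpr (List.getElem_mem _))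
    rw [← hjv]
    refine maxdest_nonneg fun a ha => hx₀ a ?_
    rw [← hS.2.2]
    exact Finset.mem_biUnion.mpr ⟨j, hj, ha⟩
  · obtain ⟨hc, hval⟩ := maxdest_greedyT_of_nonempty hx hne
    rw [hval]
    refine le_getElem_of_lt_countP (l := sortedDrops x k Sl) (Multiset.pairwise_sort _ _) _ ?_
    rw [countP_sortedDrops]
    exact (cumQ_mono q).reflect_lt
      ((lt_sum_capacity_of_le_maxdest hx hS hc).trans_le (sum_le_cumQ_card hq (filter_subset _ _)))

/-- the backward greedy allocation is feasible and minimizes the total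
cost among all feasible allocations; moreover the multiset (equivalently, the
nonincreasing sequence) of last drop-off points of every socially optimal feasible
allocation coincides with that of the backward greedy allocation. -/
theorem stmt15 (n k : ℕ) (x : ℕ → ℝ)
    (hpos : ∀ a ∈ Finset.Icc 1 n, 0 < x a)
    (hmono : ∀ a b, 1 ≤ a → a ≤ b → b ≤ n → x a ≤ x b)
    (q : ℕ → ℕ) (hq : ∀ i j, 1 ≤ i → i ≤ j → j ≤ k → q j ≤ q i)
    (hfeas : n ≤ cumQ q k) :
    FeasAlloc n k q (greedyT n q) ∧
    (∀ Sl : ℕ → Finset ℕ, FeasAlloc n k q Sl →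
      ∑ i ∈ Finset.Icc 1 k, maxdest x (greedyT n q i)
        ≤ ∑ i ∈ Finset.Icc 1 k, maxdest x (Sl i)) ∧
    (∀ Sl : ℕ → Finset ℕ, FeasAlloc n k q Sl →
      (∀ Rl : ℕ → Finset ℕ, FeasAlloc n k q Rl →
        ∑ i ∈ Finset.Icc 1 k, maxdest x (Sl i)
          ≤ ∑ i ∈ Finset.Icc 1 k, maxdest x (Rl i)) →
      (Finset.Icc 1 k).val.map (fun i => maxdest x (Sl i))
        = (Finset.Icc 1 k).val.map (fun i => maxdest x (greedyT n q i))) := by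
  have hx : MonotoneOn x (Set.Icc 1 n) := fun a ha b hb hab => hmono a b ha.1 hab hb.2
  have hq' : AntitoneOn q (Set.Icc 1 k) := fun i hi j hj hij => hq i j hi.1 hij hj.2
  have hdom := fun Sl (hS : FeasAlloc n k q Sl) =>
    forall₂_greedy_le_sortedDrops (fun a ha => (hpos a ha).le) hx hq' hS
  have hopt : ∀ Sl, FeasAlloc n k q Sl →
      ∑ i ∈ Finset.Icc 1 k, maxdest x (greedyT n q i)
        ≤ ∑ i ∈ Finset.Icc 1 k, maxdest x (Sl i) := fun Sl hS => by
    rw [sum_eq_sum_sortedDrops x k Sl, sum_Icc_one_eq_sum_map_range']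
    exact (hdom Sl hS).sum_le_sum
  refine ⟨greedyT_feasAlloc hfeas, hopt, fun Sl hS hSopt => ?_⟩
  have hsum := hSopt _ (greedyT_feasAlloc hfeas)
  rw [sum_eq_sum_sortedDrops x k Sl, sum_Icc_one_eq_sum_map_range'] at hsum
  rw [← coe_sortedDrops, ← coe_map_range'_one, (hdom Sl hS).eq_of_sum_le hsum]
end
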